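/- Let k, ℓ ∈ {1,…,d} with k ≠ ℓ, and let λ_k ∈ (0,∞). If s = s(b) ∈ Int(S_d) is a sequence such that s_k/b → λ_k as b → 0 while s_ℓ is fixed, then b^{−2} C_b(s(b);k,ℓ) → 1 − s_ℓ (λ_k + d + 2) as b → 0, where C_b(s;k,ℓ) = ∫_{S_d} (x_k − s_k)(x_ℓ − s_ℓ) κ_{s,b}(x) dx; in particular, if s_k = λ_k b exactly and s_ℓ is fixed, then C_b(s;k,ℓ) = b² {1 − s_ℓ(λ_k + d + 2)} + O(b³). -/

import Mathlib

open MeasureTheory ProbabilityTheory Real Filter Finset Matrix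

noncomputable section

/-- The unit simplex `S_d = {x ∈ [0,1]^d : x_1 + … + x_d ≤ 1}`. -/
def Sd (d : ℕ) : Set (Fin d → ℝ) :=
  {x | (∀ i, 0 ≤ x i ∧ x i ≤ 1) ∧ ∑ i, x i ≤ 1}

/-- The interior of the unit simplex. -/
def SdInt (d : ℕ) : Set (Fin d → ℝ) :=
  {x | (∀ i, 0 < x i) ∧ ∑ i, x i < 1}

/-- The Dirichlet(u, v) density on the simplex. -/
def Kdir {d : ℕ} (u : Fin d → ℝ) (v : ℝ) (x : Fin d → ℝ) : ℝ :=
  (Gamma ((∑ i, u i) + v) / (Gamma v * ∏ i, Gamma (u i))) *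
    (1 - ∑ i, x i) ^ (v - 1) * ∏ i, (x i) ^ (u i - 1)

/-- The locally adaptive Dirichlet kernel `κ_{s,b}`. -/
def kappa {d : ℕ} (s : Fin d → ℝ) (b : ℝ) : (Fin d → ℝ) → ℝ :=
  Kdir (fun i => s i / b + 1) ((1 - ∑ i, s i) / b + 1)

/-- `A_b(s) = ∫_{S_d} κ_{s,b}(x)² dx`. -/
def Adir {d : ℕ} (b : ℝ) (s : Fin d → ℝ) : ℝ :=
  ∫ x in Sd d, (kappa s b x) ^ 2

/-- Second partial derivative `∂² m / ∂ s_k ∂ s_ℓ` at `s`. -/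
def d2 {d : ℕ} (m : (Fin d → ℝ) → ℝ) (k l : Fin d) (s : Fin d → ℝ) : ℝ :=
  fderiv ℝ (fun x => fderiv ℝ m x (Pi.single l 1)) s (Pi.single k 1)

/-- The function `h_J(s)` from the paper. -/
def hJfun {d : ℕ} (m : (Fin d → ℝ) → ℝ) (J : Finset (Fin d)) (lam : Fin d → ℝ)
    (s : Fin d → ℝ) : ℝ :=
  if J = Finset.univ then
    ∑ k, ∑ l, (1 / 2 : ℝ) * ((lam k + 1) * (if k = l then 1 else 0) + 1) * d2 m k l s
  else
    ∑ k ∈ Jᶜ, ∑ l ∈ Jᶜ, (1 / 2 : ℝ) * ((if k = l then s k else 0) - s k * s l) * d2 m k l s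

/-- The function `ψ_J(s)` from the paper. -/
def psiJ {d : ℕ} (J : Finset (Fin d)) (s : Fin d → ℝ) : ℝ :=
  ((4 * π) ^ ((d : ℝ) - J.card) * (1 - ∑ i, s i) * ∏ i ∈ Jᶜ, s i) ^ (-(1 : ℝ) / 2)

/-- The product `∏_{i ∈ J} Γ(2λ_i+1) / (2^{2λ_i+1} Γ(λ_i+1)²)`. -/
def gamProd {d : ℕ} (J : Finset (Fin d)) (lam : Fin d → ℝ) : ℝ :=
  ∏ i ∈ J, Gamma (2 * lam i + 1) / ((2 : ℝ) ^ (2 * lam i + 1) * Gamma (lam i + 1) ^ 2)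

/-- The local linear smoother with Dirichlet kernel. -/
def mLL {d n : ℕ} (b : ℝ) (X : Fin n → Fin d → ℝ) (Y : Fin n → ℝ) (s : Fin d → ℝ) : ℝ :=
  let 𝒳 : Matrix (Fin n) (Fin (d + 1)) ℝ :=
    Matrix.of fun i => Fin.cases 1 (fun k => X i k - s k)
  let W : Matrix (Fin n) (Fin n) ℝ := Matrix.diagonal fun i => kappa s b (X i)
  ((𝒳ᵀ * W * 𝒳)⁻¹ *ᵥ (𝒳ᵀ *ᵥ (W *ᵥ Y))) 0

/-- The Nadaraya–Watson estimator with Dirichlet kernel. -/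
def mNW {d n : ℕ} (b : ℝ) (X : Fin n → Fin d → ℝ) (Y : Fin n → ℝ) (s : Fin d → ℝ) : ℝ :=
  (∑ i, Y i * kappa s b (X i)) / ∑ j, kappa s b (X j)

/-- Central second moment `C_b(s; k, ℓ)` of the Dirichlet kernel. -/
def CbM {d : ℕ} (b : ℝ) (s : Fin d → ℝ) (k l : Fin d) : ℝ :=
  ∫ x in Sd d, (x k - s k) * (x l - s l) * kappa s b x

end

/-!
The Dirichlet integral `∫_{S_d} (1 - ‖x‖₁)^(v-1) ∏ xᵢ^(uᵢ-1) dx = ∏ Γ(uᵢ) Γ(v) / Γ(‖u‖₁ + v)`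
follows by induction on `d`, integrating out the first coordinate with the Beta integral. It
shows that `K_{u,v}` has mass one and that `x_k K_{u,v} = u_k / (‖u‖₁ + v) · K_{u + e_k, v}`, so
the mixed moments of `κ_{s,b}` are explicit: with `A = 1/b + d + 1`, `∫ x_k κ = u_k / A` and
`∫ x_k x_ℓ κ = u_k u_ℓ / (A (A + 1))` for `k ≠ ℓ`. Hence `b⁻² C_b(s; k, ℓ) = R(s_ℓ, s_k / b, b)`
for a rational function `R` that is smooth near `b = 0`, with `R(c, t, 0) = 1 - c (t + d + 2)`.
-/

lemma isClosed_Sd (d : ℕ) : IsClosed (Sd d) := by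
  simp only [Sd, Set.ofPred_and, Set.ofPred_forall]
  exact (isClosed_iInter fun i => (isClosed_le continuous_const (continuous_apply i)).inter
    (isClosed_le (continuous_apply i) continuous_const)).inter
    (isClosed_le (by fun_prop) continuous_const)

lemma isCompact_Sd (d : ℕ) : IsCompact (Sd d) :=
  (isCompact_Icc (a := (0 : Fin d → ℝ)) (b := 1)).of_isClosed_subset (isClosed_Sd d)
    fun _ hx => ⟨fun i => (hx.1 i).1, fun i => (hx.1 i).2⟩

lemma measurableSet_Sd (d : ℕ) : MeasurableSet (Sd d) := (isClosed_Sd d).measurableSet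

lemma SdInt_subset_Sd (d : ℕ) : SdInt d ⊆ Sd d := by
  intro x ⟨hpos, hsum⟩
  refine ⟨fun i => ⟨(hpos i).le, ?_⟩, hsum.le⟩
  have := Finset.single_le_sum (fun j _ => (hpos j).le) (Finset.mem_univ i)
  linarith

lemma cons_mem_Sd {d : ℕ} (t : ℝ) (y : Fin d → ℝ) :
    Fin.cons t y ∈ Sd (d + 1) ↔ y ∈ Sd d ∧ t ∈ Set.Icc 0 (1 - ∑ i, y i) := by
  simp only [Sd, Set.mem_ofPred_eq, Fin.forall_fin_succ, Fin.cons_zero, Fin.cons_succ,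
    Fin.sum_cons, Set.mem_Icc]
  constructor
  · rintro ⟨⟨⟨ht0, -⟩, hy⟩, hsum⟩
    have := Finset.sum_nonneg fun j (_ : j ∈ Finset.univ) => (hy j).1
    exact ⟨⟨hy, by linarith⟩, ht0, by linarith⟩
  · rintro ⟨⟨hy, hysum⟩, ht0, ht1⟩
    have := Finset.sum_nonneg fun j (_ : j ∈ Finset.univ) => (hy j).1
    exact ⟨⟨⟨ht0, by linarith⟩, hy⟩, by linarith⟩

lemma setIntegral_Sd_succ {d : ℕ} {f : (Fin (d + 1) → ℝ) → ℝ}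
    (hf : IntegrableOn f (Sd (d + 1))) :
    ∫ x in Sd (d + 1), f x = ∫ y in Sd d, ∫ t in Set.Icc 0 (1 - ∑ i, y i), f (Fin.cons t y) := by
  have hmp :=
    (measurePreserving_piFinSuccAbove (fun _ : Fin (d + 1) => (volume : Measure ℝ)) 0).symm
  have hcons : ∀ z : ℝ × (Fin d → ℝ),
      (MeasurableEquiv.piFinSuccAbove (fun _ : Fin (d + 1) => ℝ) 0).symm z
        = Fin.cons z.1 z.2 := by
    intro z
    simp [MeasurableEquiv.piFinSuccAbove_symm_apply, Fin.insertNthEquiv]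
  have hint : Integrable
      (fun z : ℝ × (Fin d → ℝ) => (Sd (d + 1)).indicator f (Fin.cons z.1 z.2))
      ((volume : Measure ℝ).prod (Measure.pi fun _ => volume)) := by
    have h := (hmp.integrable_comp_emb (MeasurableEquiv.measurableEmbedding _)).2
      (by rw [← volume_pi]; exact (integrable_indicator_iff (measurableSet_Sd _)).2 hf)
    simpa only [Function.comp_def, hcons] using h
  have hinner : ∀ y : Fin d → ℝ, ∫ t, (Sd (d + 1)).indicator f (Fin.cons t y)
      = (Sd d).indicator (fun y => ∫ t in Set.Icc 0 (1 - ∑ i, y i), f (Fin.cons t y)) y := by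
    intro y
    by_cases hy : y ∈ Sd d
    · rw [Set.indicator_of_mem hy, ← integral_indicator measurableSet_Icc]
      congr 1 with t
      simp only [Set.indicator, cons_mem_Sd, hy, true_and]
    · rw [Set.indicator_of_notMem hy, ← integral_zero ℝ ℝ]
      congr 1 with t
      exact Set.indicator_of_notMem (fun h => hy ((cons_mem_Sd t y).1 h).1) _
  rw [← integral_indicator (measurableSet_Sd _), volume_pi, ← hmp.integral_comp',
    ← integral_indicator (measurableSet_Sd _), volume_pi]
  simp only [hcons]
  rw [integral_prod_symm _ hint]
  simp only [hinner]

lemma integral_rpow_mul_rpow_sub {p q c : ℝ} (hp : 0 < p) (hq : 0 < q) (hc : 0 < c) :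
    ∫ t in (0 : ℝ)..c, t ^ (p - 1) * (c - t) ^ (q - 1)
      = c ^ (p + q - 1) * (Gamma p * Gamma q / Gamma (p + q)) := by
  have key := Complex.betaIntegral_scaled p q hc
  have hbeta : Complex.betaIntegral p q = ((Gamma p * Gamma q / Gamma (p + q) : ℝ) : ℂ) := by
    have hne : Complex.Gamma ((p + q : ℝ) : ℂ) ≠ 0 := by
      rw [Complex.Gamma_ofReal]
      exact_mod_cast (Gamma_pos_of_pos (add_pos hp hq)).ne'
    push_cast at hne
    rw [Complex.ofReal_div, Complex.ofReal_mul, ← Complex.Gamma_ofReal, ← Complex.Gamma_ofReal,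
      ← Complex.Gamma_ofReal, Complex.ofReal_add, eq_div_iff hne,
      Complex.Gamma_mul_Gamma_eq_betaIntegral (by simpa) (by simpa), mul_comm]
  have hL : ∫ t in (0 : ℝ)..c, (t : ℂ) ^ ((p : ℂ) - 1) * ((c : ℂ) - t) ^ ((q : ℂ) - 1)
      = ((∫ t in (0 : ℝ)..c, t ^ (p - 1) * (c - t) ^ (q - 1) : ℝ) : ℂ) := by
    rw [← intervalIntegral.integral_ofReal]
    refine intervalIntegral.integral_congr fun t ht => ?_
    rw [Set.uIcc_of_le hc.le] at ht
    simp only [Complex.ofReal_mul, Complex.ofReal_cpow ht.1,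
      Complex.ofReal_cpow (sub_nonneg.2 ht.2), Complex.ofReal_sub, Complex.ofReal_one]
  rw [hL, hbeta, show (p : ℂ) + q - 1 = ((p + q - 1 : ℝ) : ℂ) by push_cast; rfl,
    ← Complex.ofReal_cpow hc.le, ← Complex.ofReal_mul] at key
  exact_mod_cast key

lemma setIntegral_Icc_rpow_mul_rpow_sub {p q c : ℝ} (hp : 1 ≤ p) (hq : 1 ≤ q) (hc : 0 ≤ c) :
    ∫ t in Set.Icc 0 c, t ^ (p - 1) * (c - t) ^ (q - 1)
      = c ^ (p + q - 1) * (Gamma p * Gamma q / Gamma (p + q)) := by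
  rcases hc.eq_or_lt with rfl | hc
  · simp [zero_rpow (by linarith : p + q - 1 ≠ 0)]
  · rw [integral_Icc_eq_integral_Ioc, ← intervalIntegral.integral_of_le hc.le]
    exact integral_rpow_mul_rpow_sub (by linarith) (by linarith) hc

noncomputable def dirichletWeight {d : ℕ} (u : Fin d → ℝ) (v : ℝ) (x : Fin d → ℝ) : ℝ :=
  (1 - ∑ i, x i) ^ (v - 1) * ∏ i, x i ^ (u i - 1)

section DirichletWeight

variable {d : ℕ} {u : Fin d → ℝ} {v : ℝ}

lemma sum_add_pos (hu : ∀ i, 0 ≤ u i) (hv : 0 < v) : 0 < ∑ i, u i + v := by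
  linarith [Finset.sum_nonneg fun i (_ : i ∈ Finset.univ) => hu i]

lemma continuous_dirichletWeight (hu : ∀ i, 1 ≤ u i) (hv : 1 ≤ v) :
    Continuous (dirichletWeight u v) := by
  unfold dirichletWeight
  exact ((continuous_rpow_const (by linarith)).comp (by fun_prop)).mul
    (continuous_finsetProd _ fun i _ =>
      (continuous_rpow_const (by linarith [hu i])).comp (continuous_apply i))

lemma dirichletWeight_cons (u : Fin (d + 1) → ℝ) (v t : ℝ) (y : Fin d → ℝ) :
    dirichletWeight u v (Fin.cons t y)
      = t ^ (u 0 - 1) * ((1 - ∑ i, y i) - t) ^ (v - 1) * ∏ i, y i ^ (u i.succ - 1) := by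
  simp only [dirichletWeight, Fin.sum_cons, Fin.prod_univ_succ, Fin.cons_zero, Fin.cons_succ]
  ring_nf

theorem integral_dirichletWeight (hu : ∀ i, 1 ≤ u i) (hv : 1 ≤ v) :
    ∫ x in Sd d, dirichletWeight u v x
      = (∏ i, Gamma (u i)) * Gamma v / Gamma (∑ i, u i + v) := by
  induction d generalizing v with
  | zero =>
    have hSd : Sd 0 = Set.univ := by ext x; simp [Sd]
    have hΓv : Gamma v ≠ 0 := (Gamma_pos_of_pos (by linarith)).ne'
    simp [hSd, dirichletWeight, volume_pi, measureReal_def, hΓv]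
  | succ d ih =>
    have hinner : ∀ y ∈ Sd d, ∫ t in Set.Icc 0 (1 - ∑ i, y i), dirichletWeight u v (Fin.cons t y)
        = Gamma (u 0) * Gamma v / Gamma (u 0 + v) *
          dirichletWeight (fun i => u i.succ) (u 0 + v) y := by
      intro y hy
      simp only [dirichletWeight_cons]
      rw [integral_mul_const, setIntegral_Icc_rpow_mul_rpow_sub (hu 0) hv (by linarith [hy.2]),
        dirichletWeight]
      ring
    have hu0v : 0 < Gamma (u 0 + v) := Gamma_pos_of_pos (by linarith [hu 0])
    rw [setIntegral_Sd_succ ((continuous_dirichletWeight hu hv).continuousOn.integrableOn_compact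
        (isCompact_Sd _)), setIntegral_congr_fun (measurableSet_Sd d) hinner, integral_const_mul,
      ih (fun i => hu i.succ) (by linarith [hu 0]), Fin.prod_univ_succ, Fin.sum_univ_succ,
      show ∑ i : Fin d, u i.succ + (u 0 + v) = u 0 + ∑ i : Fin d, u i.succ + v by ring]
    field_simp

lemma Kdir_eq_mul_dirichletWeight (u : Fin d → ℝ) (v : ℝ) (x : Fin d → ℝ) :
    Kdir u v x
      = Gamma (∑ i, u i + v) / (Gamma v * ∏ i, Gamma (u i)) * dirichletWeight u v x := by
  rw [Kdir, dirichletWeight]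
  ring

lemma continuous_Kdir (hu : ∀ i, 1 ≤ u i) (hv : 1 ≤ v) : Continuous (Kdir u v) := by
  simp only [funext (Kdir_eq_mul_dirichletWeight u v)]
  exact continuous_const.mul (continuous_dirichletWeight hu hv)

lemma integral_Kdir (hu : ∀ i, 1 ≤ u i) (hv : 1 ≤ v) : ∫ x in Sd d, Kdir u v x = 1 := by
  have hΓA : 0 < Gamma (∑ i, u i + v) :=
    Gamma_pos_of_pos (sum_add_pos (fun i => by linarith [hu i]) (by linarith))
  have hΓv : 0 < Gamma v := Gamma_pos_of_pos (by linarith)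
  have hΓu : 0 < ∏ i, Gamma (u i) :=
    Finset.prod_pos fun i _ => Gamma_pos_of_pos (by linarith [hu i])
  simp only [Kdir_eq_mul_dirichletWeight, integral_const_mul, integral_dirichletWeight hu hv]
  field_simp

lemma prod_apply_update (g : Fin d → ℝ → ℝ) (u : Fin d → ℝ) (k : Fin d) (a : ℝ) :
    ∏ i, g i (Function.update u k a i) = g k a * ∏ i ∈ {k}ᶜ, g i (u i) := by
  simp_rw [Function.apply_update g u]
  rw [Finset.prod_update_of_mem (Finset.mem_univ k), Finset.compl_eq_univ_sdiff]

lemma mul_Kdir_eq (hu : ∀ i, 0 < u i) (hv : 0 < v) {x : Fin d → ℝ} (hx : ∀ i, 0 ≤ x i)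
    (k : Fin d) :
    x k * Kdir u v x
      = u k / (∑ i, u i + v) * Kdir (Function.update u k (u k + 1)) v x := by
  have hA : u k + ∑ i ∈ {k}ᶜ, u i + v ≠ 0 := by
    rw [← Fintype.sum_eq_add_sum_compl k u]
    exact (sum_add_pos (fun i => (hu i).le) hv).ne'
  have hxk : x k ^ (u k + 1 - 1) = x k ^ (u k - 1) * x k := by
    rw [show u k + 1 - 1 = (u k - 1) + 1 by ring, rpow_add' (hx k) (by linarith [hu k]), rpow_one]
  rw [Kdir_eq_mul_dirichletWeight, Kdir_eq_mul_dirichletWeight, dirichletWeight, dirichletWeight,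
    Finset.sum_update_of_mem (Finset.mem_univ k), ← Finset.compl_eq_univ_sdiff,
    prod_apply_update (fun _ => Gamma), prod_apply_update (fun i a => x i ^ (a - 1)),
    Fintype.prod_eq_mul_prod_compl k (fun i => Gamma (u i)),
    Fintype.prod_eq_mul_prod_compl k (fun i => x i ^ (u i - 1)), Fintype.sum_eq_add_sum_compl k u,
    show u k + 1 + ∑ i ∈ {k}ᶜ, u i + v = (u k + ∑ i ∈ {k}ᶜ, u i + v) + 1 by ring,
    Gamma_add_one (hu k).ne', Gamma_add_one hA, hxk]
  have := (hu k).ne'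
  field_simp

lemma one_le_update_add_one (hu : ∀ i, 1 ≤ u i) (k : Fin d) :
    ∀ i, 1 ≤ Function.update u k (u k + 1) i := by
  intro i
  rcases eq_or_ne i k with rfl | hik
  · simp only [Function.update_self]; linarith [hu i]
  · simpa [hik] using hu i

lemma sum_update_add_one (u : Fin d → ℝ) (k : Fin d) :
    ∑ i, Function.update u k (u k + 1) i = ∑ i, u i + 1 := by
  rw [Finset.sum_update_of_mem (Finset.mem_univ k), ← Finset.compl_eq_univ_sdiff,
    Fintype.sum_eq_add_sum_compl k u]
  ring

lemma integral_mul_Kdir (hu : ∀ i, 1 ≤ u i) (hv : 1 ≤ v) (k : Fin d) :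
    ∫ x in Sd d, x k * Kdir u v x = u k / (∑ i, u i + v) := by
  rw [setIntegral_congr_fun (measurableSet_Sd d) fun x hx =>
      mul_Kdir_eq (fun i => by linarith [hu i]) (by linarith) (fun i => (hx.1 i).1) k,
    integral_const_mul, integral_Kdir (one_le_update_add_one hu k) hv, mul_one]

lemma integral_mul_mul_Kdir (hu : ∀ i, 1 ≤ u i) (hv : 1 ≤ v) {k l : Fin d} (hkl : k ≠ l) :
    ∫ x in Sd d, x k * x l * Kdir u v x
      = u k * u l / ((∑ i, u i + v) * (∑ i, u i + v + 1)) := by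
  calc ∫ x in Sd d, x k * x l * Kdir u v x
      = ∫ x in Sd d,
          u k / (∑ i, u i + v) * (x l * Kdir (Function.update u k (u k + 1)) v x) :=
        setIntegral_congr_fun (measurableSet_Sd d) fun x hx => by
          rw [show x k * x l * Kdir u v x = x l * (x k * Kdir u v x) by ring,
            mul_Kdir_eq (fun i => by linarith [hu i]) (by linarith) (fun i => (hx.1 i).1) k]
          ring
    _ = u k * u l / ((∑ i, u i + v) * (∑ i, u i + v + 1)) := by
        rw [integral_const_mul, integral_mul_Kdir (one_le_update_add_one hu k) hv,
          Function.update_of_ne hkl.symm, sum_update_add_one,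
          show ∑ i, u i + 1 + v = ∑ i, u i + v + 1 by ring]
        field_simp

end DirichletWeight

section Kappa

variable {d : ℕ} {b : ℝ} {s : Fin d → ℝ}

lemma one_le_kappa_params (hb : 0 < b) (hs : s ∈ Sd d) :
    (∀ i, 1 ≤ s i / b + 1) ∧ 1 ≤ (1 - ∑ i, s i) / b + 1 :=
  ⟨fun i => by linarith [div_nonneg (hs.1 i).1 hb.le],
    by linarith [div_nonneg (sub_nonneg.2 hs.2) hb.le]⟩

lemma sum_kappa_params (hb : b ≠ 0) :
    ∑ i, (s i / b + 1) + ((1 - ∑ i, s i) / b + 1) = 1 / b + d + 1 := by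
  rw [Finset.sum_add_distrib, ← Finset.sum_div, Finset.sum_const, Finset.card_univ,
    Fintype.card_fin, nsmul_one]
  field_simp
  ring

lemma CbM_eq (hb : 0 < b) (hs : s ∈ Sd d) {k l : Fin d} (hkl : k ≠ l) :
    CbM b s k l = (s k / b + 1) * (s l / b + 1) / ((1 / b + d + 1) * (1 / b + d + 1 + 1))
      - s l * ((s k / b + 1) / (1 / b + d + 1)) - s k * ((s l / b + 1) / (1 / b + d + 1))
      + s k * s l := by
  obtain ⟨hu, hv⟩ := one_le_kappa_params hb hs
  have hK : Continuous (kappa s b) := continuous_Kdir hu hv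
  have hint : ∀ f : (Fin d → ℝ) → ℝ, Continuous f → IntegrableOn f (Sd d) :=
    fun f hf => hf.continuousOn.integrableOn_compact (isCompact_Sd d)
  have hexpand : CbM b s k l = ∫ x in Sd d, (x k * x l * kappa s b x
      - s l * (x k * kappa s b x) - s k * (x l * kappa s b x) + s k * s l * kappa s b x) :=
    setIntegral_congr_fun (measurableSet_Sd d) fun x _ => by ring
  rw [hexpand, integral_add (hint _ (by fun_prop)) (hint _ (by fun_prop)),
    integral_sub (hint _ (by fun_prop)) (hint _ (by fun_prop)),
    integral_sub (hint _ (by fun_prop)) (hint _ (by fun_prop)),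
    integral_const_mul, integral_const_mul, integral_const_mul]
  simp only [kappa, integral_mul_mul_Kdir hu hv hkl, integral_mul_Kdir hu hv,
    integral_Kdir hu hv, sum_kappa_params hb.ne']
  ring

end Kappa

/-- `b⁻² C_b(s; k, ℓ)` as a function of `c = s_ℓ`, `t = s_k / b` and `b`. -/
noncomputable def cbRatio (d : ℕ) (c t b : ℝ) : ℝ :=
  (1 - c * (t + d + 2) + b * t * (d + 2) * (c * (d + 1) - 1)) /
    ((1 + (d + 1) * b) * (1 + (d + 2) * b))

lemma CbM_div_sq_eq {d : ℕ} {b : ℝ} (hb : 0 < b) {s : Fin d → ℝ} (hs : s ∈ Sd d) {k l : Fin d}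
    (hkl : k ≠ l) : CbM b s k l / b ^ 2 = cbRatio d (s l) (s k / b) b := by
  rw [CbM_eq hb hs hkl, cbRatio]
  field_simp
  ring

lemma cbRatio_zero (d : ℕ) (c t : ℝ) : cbRatio d c t 0 = 1 - c * (t + d + 2) := by
  simp [cbRatio]

lemma continuousAt_cbRatio (d : ℕ) (c t : ℝ) :
    ContinuousAt (fun p : ℝ × ℝ => cbRatio d c p.1 p.2) (t, 0) := by
  unfold cbRatio
  fun_prop (disch := norm_num)

lemma differentiableAt_cbRatio (d : ℕ) (c t : ℝ) : DifferentiableAt ℝ (cbRatio d c t) 0 := by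
  unfold cbRatio
  fun_prop (disch := norm_num)

lemma exists_pos_bound_of_isBigO_id {f : ℝ → ℝ} (hf : f =O[nhds 0] fun b => b) :
    ∃ C > 0, ∃ b₀ > 0, ∀ b ∈ Set.Ioo 0 b₀, |f b| ≤ C * b := by
  obtain ⟨C, hC, hCf⟩ := hf.exists_pos
  obtain ⟨b₀, hb₀, hball⟩ := Metric.eventually_nhds_iff.1 hCf.bound
  refine ⟨C, hC, b₀, hb₀, fun b hb => ?_⟩
  have := hball (y := b) (by rw [Real.dist_0_eq_abs, abs_of_pos hb.1]; exact hb.2)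
  simpa [abs_of_pos hb.1] using this

theorem Cb_mixed_boundary_general (d : ℕ) (k l : Fin d) (hkl : k ≠ l)
    (lamk : ℝ) (c : ℝ)
    (s : ℝ → Fin d → ℝ) (hsInt : ∀ b : ℝ, 0 < b → s b ∈ SdInt d)
    (hks : Tendsto (fun b : ℝ => s b k / b) (nhdsWithin 0 (Set.Ioi 0)) (nhds lamk))
    (hls : ∀ b : ℝ, s b l = c) :
    Tendsto (fun b : ℝ => CbM b (s b) k l / b ^ 2) (nhdsWithin 0 (Set.Ioi 0))
      (nhds (1 - c * (lamk + d + 2))) ∧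
    ((∀ b : ℝ, 0 < b → s b k = lamk * b) →
      ∃ C > (0 : ℝ), ∃ b₀ > (0 : ℝ), ∀ b ∈ Set.Ioo (0 : ℝ) b₀,
        |CbM b (s b) k l - b ^ 2 * (1 - c * (lamk + d + 2))| ≤ C * b ^ 3) := by
  have hratio : ∀ b > 0, CbM b (s b) k l / b ^ 2 = cbRatio d c (s b k / b) b := fun b hb => by
    rw [CbM_div_sq_eq hb (SdInt_subset_Sd d (hsInt b hb)) hkl, hls]
  refine ⟨?_, fun hexact => ?_⟩
  · rw [← cbRatio_zero]
    refine ((continuousAt_cbRatio d c lamk).tendsto.comp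
      (hks.prodMk_nhds nhdsWithin_le_nhds)).congr' ?_
    filter_upwards [self_mem_nhdsWithin] with b hb
    exact (hratio b hb).symm
  · obtain ⟨C, hC, b₀, hb₀, hbound⟩ := exists_pos_bound_of_isBigO_id (f := fun b =>
      cbRatio d c lamk b - cbRatio d c lamk 0) (by
        simpa using (differentiableAt_cbRatio d c lamk).isBigO_sub)
    refine ⟨C, hC, b₀, hb₀, fun b hb => ?_⟩
    have hCbM : CbM b (s b) k l = b ^ 2 * cbRatio d c lamk b := by
      have h := hratio b hb.1
      rw [hexact b hb.1, mul_div_cancel_right₀ _ hb.1.ne',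
        div_eq_iff (pow_ne_zero 2 hb.1.ne')] at h
      rw [h, mul_comm]
    calc |CbM b (s b) k l - b ^ 2 * (1 - c * (lamk + d + 2))|
        = b ^ 2 * |cbRatio d c lamk b - cbRatio d c lamk 0| := by
          rw [hCbM, cbRatio_zero, ← mul_sub, abs_mul, abs_of_nonneg (sq_nonneg b)]
      _ ≤ b ^ 2 * (C * b) := by gcongr; exact hbound b hb
      _ = C * b ^ 3 := by ring

/-- asymptotics of `C_b(s(b);k,ℓ)` when only the `k`-th coordinate
vanishes at rate `b` and the `ℓ`-th coordinate is fixed at `c`. -/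
theorem Cb_mixed_boundary (d : ℕ) (hd : 0 < d) (k l : Fin d) (hkl : k ≠ l)
    (lamk : ℝ) (hk : 0 < lamk) (c : ℝ)
    (s : ℝ → Fin d → ℝ) (hsInt : ∀ b : ℝ, 0 < b → s b ∈ SdInt d)
    (hks : Tendsto (fun b : ℝ => s b k / b) (nhdsWithin 0 (Set.Ioi 0)) (nhds lamk))
    (hls : ∀ b : ℝ, s b l = c) :
    Tendsto (fun b : ℝ => CbM b (s b) k l / b ^ 2) (nhdsWithin 0 (Set.Ioi 0))
      (nhds (1 - c * (lamk + d + 2))) ∧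
    ((∀ b : ℝ, 0 < b → s b k = lamk * b) →
      ∃ C > (0 : ℝ), ∃ b₀ > (0 : ℝ), ∀ b ∈ Set.Ioo (0 : ℝ) b₀,
        |CbM b (s b) k l - b ^ 2 * (1 - c * (lamk + d + 2))| ≤ C * b ^ 3) :=
  Cb_mixed_boundary_general d k l hkl lamk c s hsInt hks hls
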